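/- arXiv:1508.02069 — 2 statements merged into one kernel-verified Lean document; each statement's English description precedes it below -/
import Mathlib

section
/- Let 0 < m ≤ n and let S ⊆ Δⁿ be the union of m of the codimension-one faces ∂ⱼΔⁿ of the n-simplex Δⁿ. Then the inclusion S ↪ Δⁿ is an m-expansion. -/
open CategoryTheory CategoryTheory.Limits Opposite

universe v u

namespace Paper

/-- Auxiliary inductive for `m`-expansions: `ExpansionAux m n₀ i` witnesses a
finite filtration exhibiting `i` as a composite of pushouts of horn
inclusions `Λ[n,j] ↪ Δ[n]` with `m ≤ n`, the dimensions `n` being weakly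
monotone and bounded below by `n₀`. -/
inductive ExpansionAux (m : ℕ) : ℕ → ∀ {S T : SSet.{v}}, (S ⟶ T) → Prop where
  | of_iso {S T : SSet.{v}} (n₀ : ℕ) (i : S ⟶ T) (h : IsIso i) : ExpansionAux m n₀ i
  | step {S T U : SSet.{v}} (n₀ n : ℕ) (hmn : m ≤ n) (h₀ : n₀ ≤ n) (j : Fin (n + 1))
      (y : (SSet.horn (n : ℕ) j : SSet.{v}) ⟶ S) (i : S ⟶ T) (x : SSet.stdSimplex.obj (SimplexCategory.mk n) ⟶ T)
      (hpo : IsPushout y (SSet.horn n j).ι i x)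
      {rest : T ⟶ U} (hrest : ExpansionAux m n rest) :
      ExpansionAux m n₀ (i ≫ rest)

open Simplicial

/-- `i : S ⟶ T` is an `m`-expansion: it is a finite composite of pushouts of
horn inclusions `Λ[n,j] ↪ Δ[n]` with `n ≥ m`, attached in order of weakly
monotone dimension. -/
def IsExpansion (m : ℕ) {S T : SSet.{v}} (i : S ⟶ T) : Prop :=
  ExpansionAux m 0 i
/-- The union of the faces `∂ⱼΔⁿ`, `j ∈ J`, of the standard `n`-simplex: the
simplicial subset of `Δ[n]` consisting of those simplices missing some vertex
`j ∈ J`. -/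
def unionOfFaces (n : ℕ) (J : Finset (Fin (n + 1))) : SSet.{v} where
  obj m := { σ : Δ[n].obj m // ∃ j ∈ J, ∀ a, σ.down.toOrderHom a ≠ j }
  map {m m'} α := TypeCat.ofHom fun σ => ⟨Δ[n].map α σ.1, by
    obtain ⟨j, hj, h⟩ := σ.2
    exact ⟨j, hj, fun a => h (α.unop.toOrderHom a)⟩⟩

/-- The inclusion of the union of faces into the standard simplex. -/
def unionOfFacesIncl (n : ℕ) (J : Finset (Fin (n + 1))) :
    unionOfFaces.{v} n J ⟶ Δ[n] where
  app m := TypeCat.ofHom fun σ => σ.1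

/-!
Choose a vertex `k ∉ J`, possible since `m ≤ n`. For each set `b` of vertices outside `J ∪ {k}`
the face spanned by `J ∪ {k} ∪ b` has dimension `m + |b|`; attach these faces to the union of
faces in order of increasing `|b|`, so that all proper subsets of `b` come before `b`. When the
face of `b` is attached, its codimension-one faces not opposite `k` are already present: the one
missing `j ∈ J` lies in `∂ⱼΔⁿ`, the one missing `c ∈ b` in the face of `b ∖ {c}`. The face
opposite `k` contains all of `J ∪ b`, so it lies in no `∂ⱼΔⁿ` and in no face attached earlier.
Hence each step is a pushout along the horn `Λ^{m+|b|}_k`, and the face of `b = (J ∪ {k})ᶜ` is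
all of `Δⁿ`.
-/

open SSet stdSimplex

lemma _root_.IsLowerSet.insert_of_lt {α : Type*} [PartialOrder α] {s : Set α} (hs : IsLowerSet s)
    {a : α} (ha : ∀ b < a, b ∈ s) : IsLowerSet (insert a s) := by
  rintro c b hbc (rfl | hc)
  · exact (eq_or_lt_of_le hbc).imp id (ha b)
  · exact Or.inr (hs hbc hc)

lemma ExpansionAux.isIso_comp {m n₀ : ℕ} {S' S T : SSet.{v}} (e : S' ⟶ S) [IsIso e]
    {i : S ⟶ T} (h : ExpansionAux m n₀ i) : ExpansionAux m n₀ (e ≫ i) := by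
  cases h with
  | of_iso n₀ i hi => exact .of_iso n₀ _ inferInstance
  | step n₀ n hmn h₀ j y i x hpo hrest =>
    rw [← Category.assoc]
    exact .step n₀ n hmn h₀ j (y ≫ inv e) (e ≫ i) x
      (hpo.of_iso (Iso.refl _) (asIso e).symm (Iso.refl _) (Iso.refl _)
        (by simp) (by simp) (by simp) (by simp)) hrest

lemma ExpansionAux.of_range_eq {m d : ℕ} {S X : SSet.{v}} {f : S ⟶ X} [Mono f]
    {A : X.Subcomplex} (hA : Subcomplex.range f = A) (h : ExpansionAux m d A.ι) :
    ExpansionAux m d f := by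
  subst hA
  simpa only [Subcomplex.toRange_ι] using h.isIso_comp (Subcomplex.toRange f)

lemma _root_.SSet.Subcomplex.isPushout_sup_range {X Y : SSet.{v}} (A : X.Subcomplex)
    (σ : Y ⟶ X) [Mono σ] (K : Y.Subcomplex) (hK : A.preimage σ = K) :
    IsPushout
      (Subcomplex.lift (K.ι ≫ σ)
        (by rw [← Subcomplex.image_eq_range, Subcomplex.image_le_iff, hK]))
      K.ι
      (Subcomplex.homOfLE le_sup_left : (A : SSet) ⟶ (A ⊔ Subcomplex.range σ : X.Subcomplex))
      (Subcomplex.lift σ le_sup_right) := by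
  subst hK
  refine ⟨⟨rfl⟩, ⟨evaluationJointlyReflectsColimits _ fun q => ?_⟩⟩
  refine (isColimitMapCoconePushoutCoconeEquiv _ _).symm (IsPushout.isColimit ?_)
  have hσ : Function.Injective (σ.app q) := (mono_iff_injective _).1 inferInstance
  refine Types.isPushout_of_isPullback_of_mono' ?_ ?_ ?_
  · rw [Types.isPullback_iff]
    refine ⟨rfl, fun y₁ y₂ h => Subtype.ext h.2, fun a y h => ?_⟩
    have h' : a.1 = σ.app q y := congrArg Subtype.val h
    exact ⟨⟨y, show σ.app q y ∈ A.obj q from h' ▸ a.2⟩, Subtype.ext h'.symm, rfl⟩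
  · ext ⟨x, hx | ⟨y, rfl⟩⟩
    · exact iff_of_true (Or.inl ⟨⟨x, hx⟩, rfl⟩) trivial
    · exact iff_of_true (Or.inr ⟨y, rfl⟩) trivial
  · exact fun y₁ y₂ _ _ h => hσ (congrArg Subtype.val h)

lemma ExpansionAux.of_preimage_eq_horn {m d p : ℕ} {X : SSet.{v}} (A : X.Subcomplex)
    (σ : Δ[p] ⟶ X) [Mono σ] {j : Fin (p + 1)} (hA : A.preimage σ = Λ[p, j])
    (hmp : m ≤ p) (hdp : d ≤ p) (h : ExpansionAux m p (A ⊔ Subcomplex.range σ).ι) :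
    ExpansionAux m d A.ι := by
  simpa only [Subcomplex.homOfLE_ι] using
    ExpansionAux.step d p hmp hdp j _ _ _ (Subcomplex.isPushout_sup_range A σ _ hA) h

section FaceInclusion

variable {n p : ℕ} {S : Finset (Fin (n + 1))} (e : Fin (p + 1) ≃o S)

noncomputable def faceInclusion : Δ[p] ⟶ Δ[n] :=
  (isoOfRepresentableBy (faceRepresentableBy.{v} S p e)).hom ≫ (face S).ι

instance : Mono (faceInclusion.{v} e) := by
  unfold faceInclusion
  infer_instance

lemma range_faceInclusion : Subcomplex.range (faceInclusion.{v} e) = face S := by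
  rw [faceInclusion, Subcomplex.range_comp, Subcomplex.range_eq_top, Subcomplex.image_top]
  exact Subfunctor.range_ι _

lemma faceInclusion_app_apply {d : ℕ} (y : Δ[p] _⦋d⦌) (i : Fin (d + 1)) :
    (faceInclusion.{v} e).app _ y i = e (y i) :=
  rfl

lemma mem_horn_iff_exists_faceInclusion_ne {k : Fin (n + 1)} (hk : k ∈ S) {d : ℕ}
    (y : Δ[p] _⦋d⦌) :
    y ∈ Λ[p, e.symm ⟨k, hk⟩].obj _ ↔
      ∃ v ∈ S, v ≠ k ∧ ∀ i, (faceInclusion.{v} e).app _ y i ≠ v := by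
  rw [mem_horn_iff_notMem_range]
  constructor
  · rintro ⟨t, htk, ht⟩
    refine ⟨e t, (e t).2, fun h => htk ?_, fun i h => ht ⟨i, e.injective (Subtype.ext h)⟩⟩
    rw [e.eq_symm_apply]
    exact Subtype.ext h
  · rintro ⟨v, hv, hvk, hy⟩
    refine ⟨e.symm ⟨v, hv⟩,
      fun h => hvk (by simpa using congrArg Subtype.val (e.symm.injective h)),
      fun ⟨i, hi⟩ => hy i ?_⟩
    rw [faceInclusion_app_apply, hi, e.apply_symm_apply]

end FaceInclusion

section Filtration

variable {n : ℕ} (J : Finset (Fin (n + 1))) (k : Fin (n + 1))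

def expansionStage (G : Finset (Finset (Fin (n + 1)))) : (Δ[n] : SSet.{v}).Subcomplex :=
  (⨆ j ∈ J, face {j}ᶜ) ⊔ ⨆ b ∈ G, face (insert k (J ∪ b))

variable {J k}

lemma mem_expansionStage_iff {G : Finset (Finset (Fin (n + 1)))} {d : ℕ} (x : Δ[n] _⦋d⦌) :
    x ∈ (expansionStage.{v} J k G).obj _ ↔
      (∃ j ∈ J, ∀ i, x i ≠ j) ∨ ∃ B ∈ G, ∀ i, x i ∈ insert k (J ∪ B) := by
  simp [expansionStage]

lemma expansionStage_insert (G : Finset (Finset (Fin (n + 1)))) (b : Finset (Fin (n + 1))) :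
    expansionStage.{v} J k (insert b G) = expansionStage J k G ⊔ face (insert k (J ∪ b)) := by
  simp only [expansionStage, Finset.iSup_insert]
  ac_rfl

lemma expansionStage_eq_top {G : Finset (Finset (Fin (n + 1)))} (hG : (insert k J)ᶜ ∈ G) :
    expansionStage.{v} J k G = ⊤ := by
  refine top_le_iff.1 (le_sup_of_le_right (le_iSup₂_of_le _ hG ?_))
  rw [← Finset.insert_union, Finset.union_compl, face_univ]

lemma notMem_union_of_subset_compl (hkJ : k ∉ J) {b : Finset (Fin (n + 1))}
    (hb : b ⊆ (insert k J)ᶜ) : k ∉ J ∪ b :=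
  Finset.notMem_union.2 ⟨hkJ, fun h => Finset.mem_compl.1 (hb h) (Finset.mem_insert_self _ _)⟩

lemma card_insert_union_of_subset_compl (hkJ : k ∉ J) {b : Finset (Fin (n + 1))}
    (hb : b ⊆ (insert k J)ᶜ) : (insert k (J ∪ b)).card = J.card + b.card + 1 := by
  rw [Finset.card_insert_of_notMem (notMem_union_of_subset_compl hkJ hb),
    Finset.card_union_of_disjoint]
  exact Finset.disjoint_left.2 fun j hj hjb =>
    Finset.mem_compl.1 (hb hjb) (Finset.mem_insert_of_mem hj)

lemma mem_expansionStage_iff_exists_notMem {G : Finset (Finset (Fin (n + 1)))}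
    (hG : IsLowerSet (G : Set (Finset (Fin (n + 1))))) {b : Finset (Fin (n + 1))}
    (hb : b ⊆ (insert k J)ᶜ) (hbG : b ∉ G) (hsub : ∀ b' ⊂ b, b' ∈ G)
    {d : ℕ} (x : Δ[n] _⦋d⦌) (hx : ∀ i, x i ∈ insert k (J ∪ b)) :
    x ∈ (expansionStage.{v} J k G).obj _ ↔ ∃ v ∈ J ∪ b, ∀ i, x i ≠ v := by
  rw [mem_expansionStage_iff]
  constructor
  · rintro (⟨j, hj, hx'⟩ | ⟨B, hB, hxB⟩)
    · exact ⟨j, Finset.mem_union_left _ hj, hx'⟩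
    · obtain ⟨c, hcb, hcB⟩ := Finset.not_subset.1 fun hbB => hbG (hG hbB hB)
      have hc : c ∉ insert k J := Finset.mem_compl.1 (hb hcb)
      refine ⟨c, Finset.mem_union_right _ hcb, fun i hi => ?_⟩
      have := hxB i
      rw [hi, ← Finset.insert_union, Finset.mem_union] at this
      exact this.elim hc hcB
  · rintro ⟨v, hv, hxv⟩
    rcases Finset.mem_union.1 hv with hvJ | hvb
    · exact Or.inl ⟨v, hvJ, hxv⟩
    · refine Or.inr ⟨b.erase v, hsub _ (Finset.erase_ssubset hvb), fun i => ?_⟩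
      simpa [hxv i] using hx i

lemma preimage_expansionStage_faceInclusion (hkJ : k ∉ J) {G : Finset (Finset (Fin (n + 1)))}
    (hG : IsLowerSet (G : Set (Finset (Fin (n + 1))))) {b : Finset (Fin (n + 1))}
    (hb : b ⊆ (insert k J)ᶜ) (hbG : b ∉ G) (hsub : ∀ b' ⊂ b, b' ∈ G)
    {p : ℕ} (e : Fin (p + 1) ≃o (insert k (J ∪ b) : Finset (Fin (n + 1)))) :
    (expansionStage.{v} J k G).preimage (faceInclusion e) =
      Λ[p, e.symm ⟨k, Finset.mem_insert_self _ _⟩] := by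
  ext ⟨q⟩ y
  induction q using SimplexCategory.rec with | _ d
  rw [Subcomplex.preimage_obj, Set.mem_preimage,
    mem_expansionStage_iff_exists_notMem hG hb hbG hsub _ fun i => (e (y i)).2,
    mem_horn_iff_exists_faceInclusion_ne]
  have hk := notMem_union_of_subset_compl hkJ hb
  simp only [Finset.mem_insert, exists_eq_or_imp, ne_eq, not_true_eq_false, false_and, false_or]
  exact exists_congr fun v => ⟨fun ⟨hv, h⟩ => ⟨hv, fun hvk => hk (hvk ▸ hv), h⟩,
    fun ⟨hv, _, h⟩ => ⟨hv, h⟩⟩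

theorem expansionAux_ι_expansionStage {m : ℕ} (hkJ : k ∉ J) (hJ : J.card = m)
    {G : Finset (Finset (Fin (n + 1)))} (hG : IsLowerSet (G : Set (Finset (Fin (n + 1)))))
    {d : ℕ} (hd : ∀ b ∈ (insert k J)ᶜ.powerset \ G, d ≤ m + b.card) :
    ExpansionAux.{v} m d (expansionStage J k G).ι := by
  obtain ⟨N, hN⟩ : ∃ N, ((insert k J)ᶜ.powerset \ G).card = N := ⟨_, rfl⟩
  induction N generalizing G d with
  | zero =>
    have hC : (insert k J)ᶜ ∈ G :=
      Finset.sdiff_eq_empty_iff_subset.1 (Finset.card_eq_zero.1 hN) (Finset.mem_powerset_self _)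
    rw [expansionStage_eq_top hC]
    exact .of_iso d _ inferInstance
  | succ N ih =>
    obtain ⟨b, hbmem, hbmin⟩ := Finset.exists_min_image _ Finset.card
      (Finset.card_pos.1 (by rw [hN]; exact N.succ_pos))
    obtain ⟨hb, hbG⟩ := Finset.mem_sdiff.1 hbmem
    rw [Finset.mem_powerset] at hb
    have hsub : ∀ b' ⊂ b, b' ∈ G := fun b' hb' => by
      by_contra hb'G
      have := hbmin b' (Finset.mem_sdiff.2 ⟨Finset.mem_powerset.2 (hb'.subset.trans hb), hb'G⟩)
      exact (Finset.card_lt_card hb').not_ge this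
    have hcard : (insert k (J ∪ b)).card = m + b.card + 1 := by
      rw [card_insert_union_of_subset_compl hkJ hb, hJ]
    refine .of_preimage_eq_horn _ (faceInclusion ((insert k (J ∪ b)).orderIsoOfFin hcard))
      (preimage_expansionStage_faceInclusion hkJ hG hb hbG hsub _) (Nat.le_add_right _ _)
      (hd b hbmem) ?_
    rw [range_faceInclusion, ← expansionStage_insert]
    refine ih (Finset.coe_insert b G ▸ hG.insert_of_lt hsub)
      (fun b' hb' => Nat.add_le_add_left (hbmin b' ?_) m) ?_
    · exact Finset.sdiff_subset_sdiff le_rfl (Finset.subset_insert _ _) hb'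
    · rw [Finset.sdiff_insert, Finset.card_erase_of_mem hbmem, hN, Nat.add_sub_cancel]

end Filtration

instance (n : ℕ) (J : Finset (Fin (n + 1))) : Mono (unionOfFacesIncl.{v} n J) :=
  (NatTrans.mono_iff_mono_app _).2 fun _ => (mono_iff_injective _).2 Subtype.val_injective

lemma range_unionOfFacesIncl (n : ℕ) (J : Finset (Fin (n + 1))) (k : Fin (n + 1)) :
    Subcomplex.range (unionOfFacesIncl.{v} n J) = expansionStage J k ∅ := by
  ext ⟨q⟩ x
  induction q using SimplexCategory.rec with | _ d
  rw [mem_expansionStage_iff]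
  simp only [Finset.notMem_empty, false_and, exists_false, or_false]
  exact ⟨fun ⟨y, hy⟩ => hy ▸ y.2, fun hx => ⟨⟨x, hx⟩, rfl⟩⟩

theorem unionOfFaces_isExpansion_general (n m : ℕ) (hmn : m ≤ n)
    (J : Finset (Fin (n + 1))) (hJ : J.card = m) :
    IsExpansion m (unionOfFacesIncl.{v} n J) := by
  obtain ⟨k, -, hkJ⟩ := Finset.exists_mem_notMem_of_card_lt_card (s := J) (t := .univ)
    (by rw [Finset.card_univ, Fintype.card_fin]; omega)
  exact .of_range_eq (range_unionOfFacesIncl n J k)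
    (expansionAux_ι_expansionStage hkJ hJ (Finset.coe_empty ▸ isLowerSet_empty)
      fun _ _ => Nat.zero_le _)

/-- If `S ⊆ Δⁿ` is the union of `m` of the codimension-one faces of the
`n`-simplex, `0 < m ≤ n`, then the inclusion `S ↪ Δⁿ` is an `m`-expansion. -/
theorem unionOfFaces_isExpansion (n m : ℕ) (hm : 0 < m) (hmn : m ≤ n)
    (J : Finset (Fin (n + 1))) (hJ : J.card = m) :
    IsExpansion m (unionOfFacesIncl.{v} n J) :=
  unionOfFaces_isExpansion_general n m hmn J hJ

end Paper
end

section
/- Let 𝒱 be a descent category, k > 0, and X a k-category in 𝒱. Then X is (k+1)-coskeletal: for every n ≥ 0 the natural morphism Xₙ → Map(sk_{k+1}Δⁿ, X), restriction along the inclusion of the (k+1)-skeleton sk_{k+1}Δⁿ ↪ Δⁿ, is an isomorphism. -/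
open CategoryTheory CategoryTheory.Limits Simplicial Opposite

universe v u

namespace Paper

variable {V : Type u} [Category.{v} V]

/-- The simplicial set of maps from an object `A` into a simplicial object `X`. -/
def sHomF (X : CategoryTheory.SimplicialObject V) : Vᵒᵖ ⥤ SSet.{v} :=
  coyoneda ⋙ (Functor.whiskeringLeft SimplexCategoryᵒᵖ V (Type v)).obj X

/-- The presheaf on `V` of simplicial maps from a simplicial set `T` into a
simplicial object `X`; for `T` finite this is representable by the finite
limit `Map(T,X)`. -/
def mapPresheaf (T : SSet.{v}) (X : SimplicialObject V) : Vᵒᵖ ⥤ Type v :=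
  sHomF X ⋙ coyoneda.obj (op T)

/-- Restriction along a morphism of simplicial sets. -/
def restrictMap {S T : SSet.{v}} (i : S ⟶ T) (X : SimplicialObject V) :
    mapPresheaf T X ⟶ mapPresheaf S X :=
  Functor.whiskerLeft (sHomF X) (coyoneda.map i.op)

/-- Pushforward along a morphism of simplicial objects. -/
def pushMap (T : SSet.{v}) {X Y : SimplicialObject V} (f : X ⟶ Y) :
    mapPresheaf T X ⟶ mapPresheaf T Y :=
  Functor.whiskerRight (Functor.whiskerLeft coyoneda ((Functor.whiskeringLeft SimplexCategoryᵒᵖ V (Type v)).map f))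
    (coyoneda.obj (op T))

@[simp]
lemma restrictMap_id (T : SSet.{v}) (X : SimplicialObject V) :
    restrictMap (𝟙 T) X = 𝟙 (mapPresheaf T X) := by
  simp [restrictMap]
  rfl

lemma restrictMap_comp {S T U : SSet.{v}} (i : S ⟶ T) (j : T ⟶ U) (X : SimplicialObject V) :
    restrictMap (i ≫ j) X = restrictMap j X ≫ restrictMap i X := by
  ext A φ
  exact Category.assoc i j φ

lemma restrict_push_comm {S T : SSet.{v}} (i : S ⟶ T) {X Y : SimplicialObject V} (f : X ⟶ Y) :
    restrictMap i X ≫ pushMap S f = pushMap T f ≫ restrictMap i Y := by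
  ext A φ
  exact Category.assoc i φ ((Functor.whiskerLeft coyoneda
    ((Functor.whiskeringLeft SimplexCategoryᵒᵖ V (Type v)).map f)).app A)

/-- The relative mapping presheaf `Map(S ↪ T, f) = Map(S,X) ×_{Map(S,Y)} Map(T,Y)`. -/
noncomputable def relMapPresheaf {S T : SSet.{v}} (i : S ⟶ T) {X Y : SimplicialObject V}
    (f : X ⟶ Y) : Vᵒᵖ ⥤ Type v :=
  pullback (pushMap S f) (restrictMap i Y)

/-- The canonical morphism `Map(T,X) ⟶ Map(S ↪ T, f)`. -/
noncomputable def toRelMap {S T : SSet.{v}} (i : S ⟶ T) {X Y : SimplicialObject V}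
    (f : X ⟶ Y) : mapPresheaf T X ⟶ relMapPresheaf i f :=
  pullback.lift (restrictMap i X) (pushMap T f) (restrict_push_comm i f)

/-- A morphism of presheaves on `V` "is" a morphism of `V` satisfying the
morphism property `P`: it is matched with such a morphism by isomorphisms
with representable presheaves. -/
def RepMor (P : MorphismProperty V) {F G : Vᵒᵖ ⥤ Type v} (η : F ⟶ G) : Prop :=
  ∃ (A B : V) (g : A ⟶ B), P g ∧
    ∃ (eF : yoneda.obj A ≅ F) (eG : yoneda.obj B ≅ G), yoneda.map g ≫ eG.hom = eF.hom ≫ η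

/-- A descent category structure: a subcategory of covers, stable under
pullback, and satisfying the cancellation property. (The finite limit
axiom (D1) is the `HasFiniteLimits V` hypothesis.) -/
structure DescentData (V : Type u) [Category.{v} V] where
  cover : MorphismProperty V
  id_mem : ∀ X : V, cover (𝟙 X)
  comp_mem : ∀ {X Y Z : V} (f : X ⟶ Y) (g : Y ⟶ Z), cover f → cover g → cover (f ≫ g)
  pullback_mem : ∀ {P X Y Z : V} {fst : P ⟶ X} {snd : P ⟶ Y} {f : X ⟶ Z} {g : Y ⟶ Z},
    IsPullback fst snd f g → cover g → cover fst
  cancel : ∀ {X Y Z : V} (f : X ⟶ Y) (g : Y ⟶ Z), cover f → cover (f ≫ g) → cover g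

/-- A simplicial object `X` is a `k`-groupoid if each `Xₙ → Map(Λⁿᵢ, X)` is a
cover for `n > 0` and an isomorphism for `n > k`. -/
def IsKGroupoid (P : MorphismProperty V) (k : ℕ) (X : SimplicialObject V) : Prop :=
  (∀ (n : ℕ) (i : Fin (n + 2)),
      RepMor P (restrictMap (SSet.horn (n + 1) i).ι X)) ∧
  (∀ (n : ℕ) (i : Fin (n + 1)), k < n →
      IsIso (restrictMap (SSet.horn n i).ι X))

/-- A morphism of simplicial objects is a fibration if each
`Xₙ → Map(Λⁿᵢ ↪ Δⁿ, f)` is a cover for `n > 0`. -/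
def IsFibration (P : MorphismProperty V) {X Y : SimplicialObject V} (f : X ⟶ Y) : Prop :=
  ∀ (n : ℕ) (i : Fin (n + 2)), RepMor P (toRelMap (SSet.horn (n + 1) i).ι f)

/-- A morphism of simplicial objects is a hypercover if each
`Xₙ → Map(∂Δⁿ ↪ Δⁿ, f)` is a cover for `n ≥ 0`. -/
def IsHypercover (P : MorphismProperty V) {X Y : SimplicialObject V} (f : X ⟶ Y) : Prop :=
  ∀ n : ℕ, RepMor P (toRelMap (SSet.boundary n).ι f)

/-- A morphism of `k`-groupoids is a weak equivalence if it factors as `s ≫ q`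
where `q` is a hypercover and `s` is a section of a hypercover. -/
def IsWeakEquivalence (P : MorphismProperty V) (k : ℕ) {X Y : SimplicialObject V}
    (f : X ⟶ Y) : Prop :=
  ∃ (Q : SimplicialObject V) (_ : IsKGroupoid P k Q) (p : Q ⟶ X) (q : Q ⟶ Y) (s : X ⟶ Q),
    IsHypercover P p ∧ IsHypercover P q ∧ s ≫ p = 𝟙 X ∧ f = s ≫ q


/-- The thick `n`-simplex `𝚫ⁿ`, the `0`-coskeleton of `Δⁿ`: its `k`-simplices
are all functions `{0,…,k} → {0,…,n}`. -/
def thick (n : ℕ) : SSet.{v} where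
  obj k := ULift (Fin (k.unop.len + 1) → Fin (n + 1))
  map α := TypeCat.ofHom fun f => ULift.up (f.down ∘ α.unop.toOrderHom)

/-- The inclusion of the vertex `0` of the thick 1-simplex `𝚫¹`. -/
def vertexThick1 : (Δ[0] : SSet.{v}) ⟶ thick.{v} 1 where
  app k := TypeCat.ofHom fun _ => ULift.up fun _ => 0

/-- The canonical inclusion `Δⁿ ↪ 𝚫ⁿ` of the standard simplex into the thick
simplex. -/
def simplexToThick (n : ℕ) : (Δ[n] : SSet.{v}) ⟶ thick.{v} n where
  app k := TypeCat.ofHom fun σ => ULift.up σ.down.toOrderHom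

/-- A simplicial object `X` is a `k`-category if each inner horn morphism
`Xₙ → Map(Λⁿᵢ, X)`, `0 < i < n`, is a cover, and an isomorphism for `n > k`,
and the morphism `Map(𝚫¹, X) → X₀` induced by the inclusion of a vertex
`Δ⁰ ↪ 𝚫¹` is a cover. -/
def IsKCategory {V : Type u} [Category.{v} V] (P : MorphismProperty V) (k : ℕ)
    (X : SimplicialObject V) : Prop :=
  (∀ (n : ℕ) (i : Fin (n + 1)), 0 < (i : ℕ) → (i : ℕ) < n →
      RepMor P (restrictMap (SSet.horn n i).ι X)) ∧
  (∀ (n : ℕ) (i : Fin (n + 1)), 0 < (i : ℕ) → (i : ℕ) < n → k < n →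
      IsIso (restrictMap (SSet.horn n i).ι X)) ∧
  RepMor P (restrictMap vertexThick1 X)

/-- A morphism of `k`-categories is a quasi-fibration if each inner horn
morphism `Xₙ → Map(Λⁿᵢ ↪ Δⁿ, f)`, `0 < i < n`, is a cover, and the morphism
`Map(𝚫¹,X) → X₀ ×_{Y₀} Map(𝚫¹,Y)` induced by a vertex inclusion is a
cover. -/
def IsQuasiFibration {V : Type u} [Category.{v} V] (P : MorphismProperty V)
    {X Y : SimplicialObject V} (f : X ⟶ Y) : Prop :=
  (∀ (n : ℕ) (i : Fin (n + 1)), 0 < (i : ℕ) → (i : ℕ) < n →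
      RepMor P (toRelMap (SSet.horn n i).ι f)) ∧
  RepMor P (toRelMap vertexThick1 f)

/-- The `j`-skeleton of the standard simplex `Δ[n]`: the simplicial subset of
simplices whose image has at most `j + 1` vertices, i.e. which factor through
a face of dimension at most `j`. -/
def simplexSkeleton (j n : ℕ) : SSet.{v} where
  obj m := { σ : (Δ[n] : SSet.{v}).obj m //
    (Finset.image (SSet.stdSimplex.asOrderHom σ) Finset.univ).card ≤ j + 1 }
  map {m m'} α := TypeCat.ofHom fun σ => ⟨(Δ[n] : SSet.{v}).map α σ.1, by
    refine le_trans (Finset.card_le_card ?_) σ.2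
    intro x hx
    obtain ⟨a, -, rfl⟩ := Finset.mem_image.mp hx
    exact Finset.mem_image.mpr ⟨α.unop.toOrderHom a, Finset.mem_univ _, rfl⟩⟩

/-- The inclusion of the `j`-skeleton `sk_j Δⁿ ↪ Δⁿ`. -/
def simplexSkeletonIncl (j n : ℕ) : simplexSkeleton.{v} j n ⟶ Δ[n] where
  app m := TypeCat.ofHom fun σ => Subtype.val σ

end Paper

/-! For `A : V`, the simplicial set `W = Hom(A, X_•)` has unique fillers for inner horns of
dimension `> k`, hence unique extensions along `∂Δᵐ ↪ Δᵐ` for `m ≥ k + 2`: a filler of the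
horn `Λᵐᵢ ⊆ ∂Δᵐ` also has the prescribed `i`-th face, since both faces have the same boundary
and `(m - 1)`-simplices are determined by their boundary when `m - 1 > k`. The inclusion
`sk_{k+1}Δⁿ ↪ Δⁿ` is a relative cell complex whose cells are boundary inclusions of dimension
`≥ k + 2`, and morphisms along which maps into `W` extend uniquely are stable under pushouts,
coproducts and transfinite compositions. -/

universe w

namespace CategoryTheory.ObjectProperty

variable {C : Type*} [Category* C] (P : ObjectProperty C)

instance : P.isLocal.IsStableUnderCobaseChange where
  of_isPushout {A A' B B'} {f g f' g'} sq hf Z hZ := by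
    refine ⟨fun φ₁ φ₂ h ↦ sq.hom_ext h ((hf Z hZ).1 ?_), fun φ ↦ ?_⟩
    · simpa only [sq.w_assoc] using g ≫= h
    · obtain ⟨ψ, hψ⟩ := (hf Z hZ).2 (g ≫ φ)
      exact ⟨sq.desc φ ψ hψ.symm, sq.inl_desc ..⟩

instance (J : Type*) [Category* J] : P.isLocal.IsStableUnderColimitsOfShape J where
  condition X₁ X₂ c₁ c₂ h₁ h₂ f hf φ hφ Z hZ := by
    refine ⟨fun g₁ g₂ h ↦ h₂.hom_ext fun j ↦ (hf j Z hZ).1 ?_, fun g ↦ ?_⟩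
    · simpa [← reassoc_of% hφ] using c₁.ι.app j ≫= h
    · choose e he using fun j ↦ (hf j Z hZ).2 (c₁.ι.app j ≫ g)
      let c : Cocone X₂ :=
        { pt := Z
          ι.app := e
          ι.naturality j j' a := (hf j Z hZ).1 (by
            simp only at he ⊢
            simp [he, ← f.naturality_assoc]) }
      exact ⟨h₂.desc c, h₁.hom_ext fun j ↦ by simp [reassoc_of% hφ, c, he]⟩

instance : MorphismProperty.IsStableUnderCoproducts.{w} P.isLocal where

lemma isLocal_singleton_iff {X Y Z : C} (f : X ⟶ Y) :
    (singleton Z).isLocal f ↔ Function.Bijective (fun g : Y ⟶ Z ↦ f ≫ g) := by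
  simp [isLocal]

end CategoryTheory.ObjectProperty

namespace HomotopicalAlgebra.RelativeCellComplex

open MorphismProperty

variable {C : Type*} [Category* C] (P : ObjectProperty C)
  {J : Type*} [LinearOrder J] [OrderBot J] [SuccOrder J] [WellFoundedLT J]
  {α : J → Type*} {A B : (j : J) → α j → C}
  {basicCell : (j : J) → (i : α j) → A j i ⟶ B j i} {X Y : C} {f : X ⟶ Y}

lemma isLocal (c : RelativeCellComplex.{w} basicCell f)
    (hc : ∀ s : c.Cells, P.isLocal (basicCell s.j s.i)) : P.isLocal f :=
  P.isLocal.transfiniteCompositionsOfShape_le J _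
    ((c.transfiniteCompositionOfShape' hc).ofLE
      ((pushouts_monotone (coproducts_le _)).trans P.isLocal.pushouts_le)).mem

end HomotopicalAlgebra.RelativeCellComplex

lemma SimplexCategory.exists_ne_δ_comp_δ_eq {n : ℕ} (i : Fin (n + 3)) (a : Fin (n + 2)) :
    ∃ (g : ⦋n⦌ ⟶ ⦋n + 1⦌) (b : Fin (n + 3)), b ≠ i ∧ δ a ≫ δ i = g ≫ δ b :=
  ⟨factor_δ (δ a ≫ δ i) (i.succAbove a), i.succAbove a, Fin.succAbove_ne i a,
    (factor_δ_spec (δ a ≫ δ i) _ fun k ↦ i.succAbove_right_injective.ne (a.succAbove_ne k)).symm⟩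

namespace SSet

lemma horn_le_boundary (n : ℕ) (i : Fin (n + 1)) : Λ[n, i] ≤ ∂Δ[n] := by
  rw [horn_eq_iSup]
  exact iSup_le fun j ↦ face_singleton_compl_le_boundary _

lemma boundary.ι_eq_horn_ι {n : ℕ} (i j : Fin (n + 2)) (hj : j ≠ i) :
    boundary.ι j = horn.ι i j hj ≫ Subcomplex.homOfLE (horn_le_boundary _ i) := by
  rw [← cancel_mono ∂Δ[n + 1].ι]
  simp

variable {W : SSet.{u}}

lemma injective_boundary_of_injective_horn {n : ℕ} (i : Fin (n + 1))
    (h : Function.Injective fun σ : Δ[n] ⟶ W ↦ Λ[n, i].ι ≫ σ) :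
    Function.Injective fun σ : Δ[n] ⟶ W ↦ ∂Δ[n].ι ≫ σ := by
  intro σ₁ σ₂ hσ
  apply h
  simp only [← Subcomplex.homOfLE_ι (horn_le_boundary n i), Category.assoc]
  exact congrArg _ hσ

lemma surjective_boundary_of_surjective_horn {n : ℕ} (i : Fin (n + 3))
    (hΛ : Function.Surjective fun σ : Δ[n + 2] ⟶ W ↦ Λ[n + 2, i].ι ≫ σ)
    (hbd : Function.Injective fun τ : Δ[n + 1] ⟶ W ↦ ∂Δ[n + 1].ι ≫ τ) :
    Function.Surjective fun σ : Δ[n + 2] ⟶ W ↦ ∂Δ[n + 2].ι ≫ σ := by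
  intro b
  obtain ⟨σ, hσ⟩ := hΛ (Subcomplex.homOfLE (horn_le_boundary _ i) ≫ b)
  have face_ne : ∀ j, j ≠ i → stdSimplex.δ j ≫ σ = boundary.ι j ≫ b := fun j hj ↦ by
    rw [boundary.ι_eq_horn_ι i j hj, Category.assoc, ← hσ, ← horn.ι_ι_assoc i j hj]
  refine ⟨σ, boundary.hom_ext fun j ↦ ?_⟩
  simp only [boundary.ι_ι_assoc]
  obtain rfl | hj := eq_or_ne j i
  · refine hbd (boundary.hom_ext fun a ↦ ?_)
    obtain ⟨g, b', hb', h⟩ := SimplexCategory.exists_ne_δ_comp_δ_eq j a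
    replace h : stdSimplex.δ a ≫ stdSimplex.δ j = SSet.stdSimplex.map g ≫ stdSimplex.δ b' := by
      rw [CosimplicialObject.δ, CosimplicialObject.δ, CosimplicialObject.δ,
        ← SSet.stdSimplex.map_comp, h, SSet.stdSimplex.map_comp]
    have h' : stdSimplex.δ a ≫ boundary.ι j = SSet.stdSimplex.map g ≫ boundary.ι b' := by
      simpa only [← cancel_mono ∂Δ[n + 2].ι, Category.assoc, boundary.ι_ι] using h
    simp only [boundary.ι_ι_assoc]
    rw [reassoc_of% h', ← face_ne b' hb', reassoc_of% h]
  · exact face_ne j hj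

lemma bijective_boundary_of_bijective_horn {k : ℕ}
    (hW : ∀ m, k < m → ∃ i : Fin (m + 1),
      Function.Bijective fun σ : Δ[m] ⟶ W ↦ Λ[m, i].ι ≫ σ)
    (d : ℕ) (hd : k + 1 < d) :
    Function.Bijective fun σ : Δ[d] ⟶ W ↦ ∂Δ[d].ι ≫ σ := by
  have injective_boundary (m : ℕ) (hm : k < m) :
      Function.Injective fun σ : Δ[m] ⟶ W ↦ ∂Δ[m].ι ≫ σ :=
    let ⟨i, hi⟩ := hW m hm
    injective_boundary_of_injective_horn i hi.1
  obtain ⟨n, rfl⟩ : ∃ n, d = n + 2 := ⟨d - 2, by omega⟩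
  obtain ⟨i, hi⟩ := hW (n + 2) (by omega)
  exact ⟨injective_boundary _ (by omega),
    surjective_boundary_of_surjective_horn i hi.2 (injective_boundary _ (by omega))⟩

lemma isLocal_of_mono (P : ObjectProperty SSet.{u}) {X Y : SSet.{u}} (i : X ⟶ Y) [Mono i]
    (h : ∀ (d : ℕ) (y : Y _⦋d⦌), y ∈ Y.nonDegenerate d → y ∉ Set.range (i.app _) →
      P.isLocal ∂Δ[d].ι) :
    P.isLocal i :=
  (relativeCellComplexOfMono i).isLocal P fun s ↦ h s.j s.k.simplex s.k.nonDegenerate s.k.notMem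

end SSet

namespace Paper

variable {V : Type u} [Category.{v} V]

instance (j n : ℕ) : Mono (simplexSkeletonIncl.{v} j n) := by
  have (m : SimplexCategoryᵒᵖ) : Mono ((simplexSkeletonIncl.{v} j n).app m) :=
    (mono_iff_injective _).2 Subtype.val_injective
  exact NatTrans.mono_of_mono_app _

lemma lt_of_notMem_range_simplexSkeletonIncl {j n d : ℕ} (y : Δ[n] _⦋d⦌)
    (hy : y ∉ Set.range ((simplexSkeletonIncl.{v} j n).app _)) : j < d := by
  by_contra! h
  refine hy ⟨⟨y, Finset.card_image_le.trans ?_⟩, rfl⟩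
  simpa using h

lemma isIso_restrictMap_iff {S T : SSet.{v}} (i : S ⟶ T) (X : SimplicialObject V) :
    IsIso (restrictMap i X) ↔
      ∀ A : Vᵒᵖ, Function.Bijective fun φ : T ⟶ (sHomF X).obj A ↦ i ≫ φ := by
  simp only [NatTrans.isIso_iff_isIso_app, isIso_iff_bijective]
  rfl

theorem kCategory_coskeletal_general {V : Type u} [Category.{v} V]
    (D : DescentData V) (k : ℕ) (hk : 0 < k) (X : SimplicialObject V)
    (hX : IsKCategory D.cover k X) (n : ℕ) :
    IsIso (restrictMap (simplexSkeletonIncl.{v} (k + 1) n) X) := by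
  obtain ⟨-, hInnerHorn, -⟩ := hX
  rw [isIso_restrictMap_iff]
  intro A
  have hFill : ∀ m, k < m → ∃ i : Fin (m + 1),
      Function.Bijective fun σ : Δ[m] ⟶ (sHomF X).obj A ↦ Λ[m, i].ι ≫ σ := fun m hm ↦
    ⟨⟨1, by omega⟩, (isIso_restrictMap_iff _ X).1
      (hInnerHorn m _ Nat.one_pos (show 1 < m by omega) hm) A⟩
  rw [← ObjectProperty.isLocal_singleton_iff]
  refine SSet.isLocal_of_mono _ _ fun d y _ hy ↦ ?_
  rw [ObjectProperty.isLocal_singleton_iff]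
  exact SSet.bijective_boundary_of_bijective_horn hFill d
    (lt_of_notMem_range_simplexSkeletonIncl y hy)

/-- A `k`-category is `(k+1)`-coskeletal: restriction along the inclusion of
the `(k+1)`-skeleton, `Xₙ → Map(sk_{k+1}Δⁿ, X)`, is an isomorphism for all
`n`. -/
theorem kCategory_coskeletal {V : Type u} [Category.{v} V] [HasFiniteLimits V]
    (D : DescentData V) (k : ℕ) (hk : 0 < k) (X : SimplicialObject V)
    (hX : IsKCategory D.cover k X) (n : ℕ) :
    IsIso (restrictMap (simplexSkeletonIncl.{v} (k + 1) n) X) :=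
  kCategory_coskeletal_general D k hk X hX n

end Paper
end
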